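/- arXiv:1602.06221 — 2 statements merged into one kernel-verified Lean document; each statement's English description precedes it below -/
import Mathlib

section
/- If C and D are Cpo-algebraically compact Cpo-categories, then the product category C × D, which is a Cpo-category with hom-sets ordered componentwise, is Cpo-algebraically compact: every Cpo-endofunctor of C × D has an initial algebra whose structure map is an isomorphism and whose inverse is a terminal coalgebra. -/
open CategoryTheory OmegaCompletePartialOrder Limits

universe w v u v₁ u₁ v₂ u₂

/-- A `Cpo`-category: a category whose hom-sets carry an ω-complete partial
order such that composition is monotone and ω-continuous in each argument. -/
class CpoCategory (C : Type u) [Category.{v} C]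
    [∀ X Y : C, OmegaCompletePartialOrder (X ⟶ Y)] : Prop where
  comp_le_comp : ∀ {X Y Z : C} {f f' : X ⟶ Y} {g g' : Y ⟶ Z},
      f ≤ f' → g ≤ g' → f ≫ g ≤ f' ≫ g'
  ωSup_comp : ∀ {X Y Z : C} (c : Chain (X ⟶ Y)) (g : Y ⟶ Z),
      ωSup c ≫ g = ωSup (c.map ⟨fun f => f ≫ g, fun _ _ h => comp_le_comp h le_rfl⟩)
  comp_ωSup : ∀ {X Y Z : C} (f : X ⟶ Y) (c : Chain (Y ⟶ Z)),
      f ≫ ωSup c = ωSup (c.map ⟨fun g => f ≫ g, fun _ _ h => comp_le_comp le_rfl h⟩)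

/-- A `Cpo`-functor: a functor between `Cpo`-categories whose action on
hom-sets is monotone and preserves suprema of ω-chains. -/
def IsCpoFunctor {C : Type u} {D : Type u₁} [Category.{v} C] [Category.{v₁} D]
    [∀ X Y : C, OmegaCompletePartialOrder (X ⟶ Y)]
    [∀ X Y : D, OmegaCompletePartialOrder (X ⟶ Y)] (F : C ⥤ D) : Prop :=
  ∀ (X Y : C), ∃ hm : Monotone (fun f : X ⟶ Y => F.map f),
    ∀ c : Chain (X ⟶ Y), F.map (ωSup c) = ωSup (c.map ⟨fun f => F.map f, hm⟩)

instance instOppositeTypePartialOrder {α : Type u} [PartialOrder α] : PartialOrder (αᵒᵖ) :=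
  PartialOrder.lift Opposite.unop Opposite.unop_injective

instance instOppositeTypeOmega {α : Type u} [OmegaCompletePartialOrder α] :
    OmegaCompletePartialOrder (αᵒᵖ) :=
  OmegaCompletePartialOrder.lift (⟨Opposite.unop, fun _ _ h => h⟩ : αᵒᵖ →o α)
    (fun c => Opposite.op (ωSup (c.map (⟨Opposite.unop, fun _ _ h => h⟩ : αᵒᵖ →o α))))
    (fun _ _ h => h) (fun _ => rfl)

/-- The hom-sets of the opposite of a `Cpo`-category carry the same orders. -/
instance instOppositeHomOmega {C : Type u} [Category.{v} C]
    [∀ X Y : C, OmegaCompletePartialOrder (X ⟶ Y)] :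
    ∀ X Y : Cᵒᵖ, OmegaCompletePartialOrder (X ⟶ Y) :=
  fun X Y => inferInstanceAs (OmegaCompletePartialOrder ((Y.unop ⟶ X.unop)ᵒᵖ))

/-- The hom-sets of a product of `Cpo`-categories are ordered componentwise. -/
instance instProdHomOmega {C : Type u} {D : Type u₁} [Category.{v} C] [Category.{v₁} D]
    [∀ X Y : C, OmegaCompletePartialOrder (X ⟶ Y)]
    [∀ X Y : D, OmegaCompletePartialOrder (X ⟶ Y)] :
    ∀ X Y : C × D, OmegaCompletePartialOrder (X ⟶ Y) :=
  fun X Y => inferInstanceAs (OmegaCompletePartialOrder ((X.1 ⟶ Y.1) × (X.2 ⟶ Y.2)))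

/-- A `Cpo`-category is `Cpo`-algebraically compact when every
`Cpo`-endofunctor has an initial algebra whose structure map is an isomorphism
and whose inverse is a terminal coalgebra. -/
def CpoAlgebraicallyCompact (C : Type u) [Category.{v} C]
    [∀ X Y : C, OmegaCompletePartialOrder (X ⟶ Y)] : Prop :=
  ∀ F : C ⥤ C, IsCpoFunctor F →
    ∃ A : Endofunctor.Algebra F, Nonempty (IsInitial A) ∧
      ∃ b : A.a ⟶ F.obj A.a, A.str ≫ b = 𝟙 (F.obj A.a) ∧ b ≫ A.str = 𝟙 A.a ∧
        Nonempty (IsTerminal (⟨A.a, b⟩ : Endofunctor.Coalgebra F))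

/-! Bekić's argument. For each `Y : D`, compactness of `C` gives a bifree algebra `A Y` of
`X ↦ F(X, Y).1`; initiality makes `Y ↦ A Y` a functor, and it is a Cpo-functor because its value
at `g` is the unique fixed point of a map that is continuous jointly in the point and in `g`.
Compactness of `D` then gives a bifree algebra `B` of `Y ↦ F(A Y, Y).2`, and `(A B, B)` is a bifree
`F`-algebra: for a morphism `(u, v)` out of it (or into it), the first component is forced to be
the `A`-fold (unfold) precomposed (postcomposed) with the action of `v`, and then `v` is forced to
be the `B`-fold (unfold). -/

open CategoryTheory.Prod

namespace OmegaCompletePartialOrder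

variable {α β : Type*} [OmegaCompletePartialOrder α] [OmegaCompletePartialOrder β]

theorem ωScottContinuous.of_isFixedPt_iff {f : α × β → α} (hf : ωScottContinuous f)
    {g : β → α} (hg : ∀ a b, f (a, b) = a ↔ a = g b) : ωScottContinuous g := by
  have hfix : ∀ b, f (g b, b) = g b := fun b => (hg _ b).2 rfl
  have hmono : Monotone g := by
    intro b b' hb
    let φ : α →𝒄 α := ⟨⟨fun a => f (a, b'), fun a a' ha => hf.monotone ⟨ha, le_rfl⟩⟩,
      ωScottContinuous.map_ωSup (by fun_prop)⟩
    have hle : g b ≤ φ (g b) := (hfix b).ge.trans (hf.monotone ⟨le_rfl, hb⟩)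
    let c := fixedPoints.iterateChain φ (g b) hle
    have hsup : f (ωSup c, b') = ωSup c := fixedPoints.ωSup_iterate_mem_fixedPoint φ (g b) hle
    exact (le_ωSup c 0).trans_eq ((hg _ b').1 hsup)
  refine ωScottContinuous.of_monotone_map_ωSup ⟨hmono, fun c => ((hg _ _).1 ?_).symm⟩
  calc f (ωSup (c.map ⟨g, hmono⟩), ωSup c)
      = ωSup (((c.map ⟨g, hmono⟩).zip c).map ⟨f, hf.monotone⟩) := by
        rw [← Prod.ωSup_zip, hf.map_ωSup]
    _ = ωSup (c.map ⟨g, hmono⟩) := by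
        congr 1; ext n; exact hfix (c n)

end OmegaCompletePartialOrder

section Product

variable {C : Type u} {D : Type u₁} [Category.{v} C] [Category.{v₁} D]

theorem CategoryTheory.Functor.map_fst_comp_map_fst (F : C × D ⥤ C × D) {P Q R : C × D}
    (p : P ⟶ Q) (q : Q ⟶ R) : (F.map p).1 ≫ (F.map q).1 = (F.map (p ≫ q)).1 := by
  rw [F.map_comp]; rfl

theorem CategoryTheory.Functor.map_snd_comp_map_snd (F : C × D ⥤ C × D) {P Q R : C × D}
    (p : P ⟶ Q) (q : Q ⟶ R) : (F.map p).2 ≫ (F.map q).2 = (F.map (p ≫ q)).2 := by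
  rw [F.map_comp]; rfl

-- `fstAt`, `sndAlong` and `bifreeFunctor` are reducible so that `rw` sees `(F.fstAt Y).obj X`
-- as `(F.obj (X, Y)).1`, and similarly for the others.
@[reducible]
def CategoryTheory.Functor.fstAt (F : C × D ⥤ C × D) (Y : D) : C ⥤ C where
  obj X := (F.obj (X, Y)).1
  map f := (F.map (f ×ₘ 𝟙 Y)).1
  map_comp f g := by rw [F.map_fst_comp_map_fst]; simp

@[reducible]
def CategoryTheory.Functor.sndAlong (F : C × D ⥤ C × D) (Φ : D ⥤ C) : D ⥤ D where
  obj Y := (F.obj (Φ.obj Y, Y)).2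
  map g := (F.map (Φ.map g ×ₘ g)).2
  map_comp f g := by rw [F.map_snd_comp_map_snd]; simp

end Product

section CpoFunctor

variable {C : Type u} {D : Type u₁} {E : Type u₂} [Category.{v} C] [Category.{v₁} D]
  [Category.{v₂} E] [∀ X Y : C, OmegaCompletePartialOrder (X ⟶ Y)]
  [∀ X Y : D, OmegaCompletePartialOrder (X ⟶ Y)] [∀ X Y : E, OmegaCompletePartialOrder (X ⟶ Y)]

theorem CpoCategory.ωScottContinuous_comp_const [CpoCategory C] {X Y Z : C} (g : Y ⟶ Z) :
    ωScottContinuous fun f : X ⟶ Y => f ≫ g :=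
  .of_monotone_map_ωSup ⟨fun _ _ h => comp_le_comp h le_rfl, fun c => ωSup_comp c g⟩

theorem CpoCategory.ωScottContinuous_const_comp [CpoCategory C] {X Y Z : C} (f : X ⟶ Y) :
    ωScottContinuous fun g : Y ⟶ Z => f ≫ g :=
  .of_monotone_map_ωSup ⟨fun _ _ h => comp_le_comp le_rfl h, fun c => comp_ωSup f c⟩

theorem isCpoFunctor_iff {F : C ⥤ D} :
    IsCpoFunctor F ↔ ∀ X Y : C, ωScottContinuous fun f : X ⟶ Y => F.map f :=
  forall₂_congr fun _ _ => ωScottContinuous_iff_monotone_map_ωSup.symm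

theorem IsCpoFunctor.ωScottContinuous_map {F : C ⥤ D} (hF : IsCpoFunctor F) (X Y : C) :
    ωScottContinuous fun f : X ⟶ Y => F.map f :=
  isCpoFunctor_iff.1 hF X Y

theorem IsCpoFunctor.comp {F : C ⥤ D} {G : D ⥤ E} (hF : IsCpoFunctor F) (hG : IsCpoFunctor G) :
    IsCpoFunctor (F ⋙ G) :=
  isCpoFunctor_iff.2 fun X Y => (hG.ωScottContinuous_map _ _).comp (hF.ωScottContinuous_map X Y)

theorem isCpoFunctor_id : IsCpoFunctor (𝟭 C) :=
  isCpoFunctor_iff.2 fun _ _ => ωScottContinuous.id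

theorem isCpoFunctor_fst : IsCpoFunctor (CategoryTheory.Prod.fst C D) :=
  isCpoFunctor_iff.2 fun _ _ => Prod.ωScottContinuous_fst

theorem isCpoFunctor_snd : IsCpoFunctor (CategoryTheory.Prod.snd C D) :=
  isCpoFunctor_iff.2 fun _ _ => Prod.ωScottContinuous_snd

theorem isCpoFunctor_sectL (Y : D) : IsCpoFunctor (Prod.sectL C Y) :=
  isCpoFunctor_iff.2 fun _ _ =>
    Prod.ωScottContinuous.prodMk ωScottContinuous.id ωScottContinuous.const

theorem IsCpoFunctor.prod' {F : E ⥤ C} {G : E ⥤ D} (hF : IsCpoFunctor F) (hG : IsCpoFunctor G) :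
    IsCpoFunctor (F.prod' G) :=
  isCpoFunctor_iff.2 fun X Y =>
    Prod.ωScottContinuous.prodMk (hF.ωScottContinuous_map X Y) (hG.ωScottContinuous_map X Y)

theorem IsCpoFunctor.fstAt {F : C × D ⥤ C × D} (hF : IsCpoFunctor F) (Y : D) :
    IsCpoFunctor (F.fstAt Y) :=
  (isCpoFunctor_sectL Y).comp (hF.comp isCpoFunctor_fst)

theorem IsCpoFunctor.sndAlong {F : C × D ⥤ C × D} (hF : IsCpoFunctor F) {Φ : D ⥤ C}
    (hΦ : IsCpoFunctor Φ) : IsCpoFunctor (F.sndAlong Φ) :=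
  (hΦ.prod' isCpoFunctor_id).comp (hF.comp isCpoFunctor_snd)

end CpoFunctor

structure BifreeAlgebra {E : Type u₂} [Category.{v₂} E] (T : E ⥤ E) where
  carrier : E
  str : T.obj carrier ≅ carrier
  isInitial : IsInitial (Endofunctor.Algebra.mk carrier str.hom)
  isTerminal : IsTerminal (Endofunctor.Coalgebra.mk carrier str.inv)

namespace BifreeAlgebra

variable {E : Type u₂} [Category.{v₂} E] {T : E ⥤ E} (A : BifreeAlgebra T)

noncomputable def fold {X : E} (x : T.obj X ⟶ X) : A.carrier ⟶ X :=
  (A.isInitial.to ⟨X, x⟩).f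

noncomputable def unfold {X : E} (x : X ⟶ T.obj X) : X ⟶ A.carrier :=
  (A.isTerminal.from ⟨X, x⟩).f

variable {A}

theorem eq_fold_iff {X : E} {x : T.obj X ⟶ X} {m : A.carrier ⟶ X} :
    m = A.fold x ↔ A.str.hom ≫ m = T.map m ≫ x := by
  refine ⟨fun hm => hm ▸ (A.isInitial.to ⟨X, x⟩).h.symm, fun h => ?_⟩
  let f : Endofunctor.Algebra.mk A.carrier A.str.hom ⟶ ⟨X, x⟩ := ⟨m, h.symm⟩
  exact congrArg Endofunctor.Algebra.Hom.f (A.isInitial.hom_ext f _)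

theorem eq_unfold_iff {X : E} {x : X ⟶ T.obj X} {m : X ⟶ A.carrier} :
    m = A.unfold x ↔ m ≫ A.str.inv = x ≫ T.map m := by
  refine ⟨fun hm => hm ▸ (A.isTerminal.from ⟨X, x⟩).h.symm, fun h => ?_⟩
  let f : Endofunctor.Coalgebra.mk X x ⟶ ⟨A.carrier, A.str.inv⟩ := ⟨m, h.symm⟩
  exact congrArg Endofunctor.Coalgebra.Hom.f (A.isTerminal.hom_ext f _)

end BifreeAlgebra

theorem cpoAlgebraicallyCompact_iff {C : Type u} [Category.{v} C]
    [∀ X Y : C, OmegaCompletePartialOrder (X ⟶ Y)] :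
    CpoAlgebraicallyCompact C ↔ ∀ F : C ⥤ C, IsCpoFunctor F → Nonempty (BifreeAlgebra F) := by
  refine forall₂_congr fun F _ => ⟨?_, ?_⟩
  · rintro ⟨A, ⟨hA⟩, b, hab, hba, ⟨hb⟩⟩
    exact ⟨⟨A.a, ⟨A.str, b, hab, hba⟩, hA, hb⟩⟩
  · rintro ⟨A⟩
    exact ⟨⟨A.carrier, A.str.hom⟩, ⟨A.isInitial⟩, A.str.inv, A.str.hom_inv_id, A.str.inv_hom_id,
      ⟨A.isTerminal⟩⟩

namespace BifreeAlgebra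

section Parametrized

variable {C : Type u} {D : Type u₁} [Category.{v} C] [Category.{v₁} D] {F : C × D ⥤ C × D}
  (A : ∀ Y : D, BifreeAlgebra (F.fstAt Y))

theorem eq_fold_mkHom_iff {Y Y' : D} (g : Y ⟶ Y') {X : C} (x : (F.obj (X, Y')).1 ⟶ X)
    (m : (A Y).carrier ⟶ X) :
    m = (A Y).fold ((F.map (𝟙 X ×ₘ g)).1 ≫ x) ↔
      (A Y).str.hom ≫ m = (F.map (m ×ₘ g)).1 ≫ x := by
  simp [eq_fold_iff, reassoc_of% (F.map_fst_comp_map_fst _ _)]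

theorem eq_unfold_mkHom_iff {Y Y' : D} (g : Y ⟶ Y') {X : C} (x : X ⟶ (F.obj (X, Y)).1)
    (m : X ⟶ (A Y').carrier) :
    m = (A Y').unfold (x ≫ (F.map (𝟙 X ×ₘ g)).1) ↔
      m ≫ (A Y').str.inv = x ≫ (F.map (m ×ₘ g)).1 := by
  simp [eq_unfold_iff, Functor.map_fst_comp_map_fst]

@[reducible]
noncomputable def bifreeFunctor : D ⥤ C where
  obj Y := (A Y).carrier
  map {Y Y'} g := (A Y).fold ((F.map (𝟙 _ ×ₘ g)).1 ≫ (A Y').str.hom)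
  map_id Y := ((eq_fold_mkHom_iff A _ _ _).2 (by simp)).symm
  map_comp g g' := by
    refine ((eq_fold_mkHom_iff A _ _ _).2 ?_).symm
    rw [reassoc_of% ((eq_fold_mkHom_iff A g _ _).1 rfl), (eq_fold_mkHom_iff A g' _ _).1 rfl,
      reassoc_of% (F.map_fst_comp_map_fst _ _)]
    rfl

variable {A}

theorem eq_bifreeFunctor_map_iff {Y Y' : D} (g : Y ⟶ Y') (m : (A Y).carrier ⟶ (A Y').carrier) :
    m = (bifreeFunctor A).map g ↔ (A Y).str.hom ≫ m = (F.map (m ×ₘ g)).1 ≫ (A Y').str.hom :=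
  eq_fold_mkHom_iff A g _ m

theorem str_hom_comp_bifreeFunctor_map {Y Y' : D} (g : Y ⟶ Y') :
    (A Y).str.hom ≫ (bifreeFunctor A).map g
      = (F.map ((bifreeFunctor A).map g ×ₘ g)).1 ≫ (A Y').str.hom :=
  (eq_bifreeFunctor_map_iff g _).1 rfl

theorem bifreeFunctor_map_comp_str_inv {Y Y' : D} (g : Y ⟶ Y') :
    (bifreeFunctor A).map g ≫ (A Y').str.inv
      = (A Y).str.inv ≫ (F.map ((bifreeFunctor A).map g ×ₘ g)).1 := by
  rw [Iso.eq_inv_comp, reassoc_of% (str_hom_comp_bifreeFunctor_map g), Iso.hom_inv_id,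
    Category.comp_id]

theorem fold_map_mkHom_comp {Y Y' : D} (g : Y ⟶ Y') {X : C} (x : (F.obj (X, Y')).1 ⟶ X) :
    (A Y).fold ((F.map (𝟙 X ×ₘ g)).1 ≫ x) = (bifreeFunctor A).map g ≫ (A Y').fold x := by
  refine ((eq_fold_mkHom_iff A g x _).2 ?_).symm
  rw [reassoc_of% (str_hom_comp_bifreeFunctor_map g), eq_fold_iff.1 rfl,
    reassoc_of% (F.map_fst_comp_map_fst _ _)]
  simp

theorem unfold_comp_map_mkHom {Y Y' : D} (g : Y ⟶ Y') {X : C} (x : X ⟶ (F.obj (X, Y)).1) :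
    (A Y').unfold (x ≫ (F.map (𝟙 X ×ₘ g)).1) = (A Y).unfold x ≫ (bifreeFunctor A).map g := by
  refine ((eq_unfold_mkHom_iff A g x _).2 ?_).symm
  rw [Category.assoc, bifreeFunctor_map_comp_str_inv, reassoc_of% (eq_unfold_iff.1 rfl),
    F.map_fst_comp_map_fst]
  simp

theorem isCpoFunctor_bifreeFunctor [∀ X Y : C, OmegaCompletePartialOrder (X ⟶ Y)]
    [∀ X Y : D, OmegaCompletePartialOrder (X ⟶ Y)] [CpoCategory C] (hF : IsCpoFunctor F) :
    IsCpoFunctor (bifreeFunctor A) := by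
  refine isCpoFunctor_iff.2 fun Y Y' => ωScottContinuous.of_isFixedPt_iff
    (f := fun p : ((A Y).carrier ⟶ (A Y').carrier) × (Y ⟶ Y') =>
      (A Y).str.inv ≫ (F.map (p.1 ×ₘ p.2)).1 ≫ (A Y').str.hom) ?_ fun m g => ?_
  · exact (CpoCategory.ωScottContinuous_const_comp _).comp
      ((CpoCategory.ωScottContinuous_comp_const _).comp
        (Prod.ωScottContinuous_fst.comp
          (hF.ωScottContinuous_map ((A Y).carrier, Y) ((A Y').carrier, Y'))))
  · rw [Iso.inv_comp_eq, eq_comm, ← eq_bifreeFunctor_map_iff]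

end Parametrized

section Bekic

variable {C : Type u} {D : Type u₁} [Category.{v} C] [Category.{v₁} D] {F : C × D ⥤ C × D}
  (A : ∀ Y : D, BifreeAlgebra (F.fstAt Y)) (B : BifreeAlgebra (F.sndAlong (bifreeFunctor A)))

def bekicIso : F.obj ((A B.carrier).carrier, B.carrier) ≅ ((A B.carrier).carrier, B.carrier) :=
  Iso.prod (A B.carrier).str B.str

theorem bekic_isAlgebraHom_iff {X : C} {Y : D} (s : F.obj (X, Y) ⟶ (X, Y))
    (u : (A B.carrier).carrier ⟶ X) (v : B.carrier ⟶ Y) :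
    F.map (u ×ₘ v) ≫ s = (bekicIso A B).hom ≫ (u ×ₘ v) ↔
      u = (bifreeFunctor A).map v ≫ (A Y).fold s.1 ∧
        v = B.fold ((F.map ((A Y).fold s.1 ×ₘ 𝟙 Y)).2 ≫ s.2) := by
  have hu : (F.map (u ×ₘ v)).1 ≫ s.1 = (A B.carrier).str.hom ≫ u ↔
      u = (bifreeFunctor A).map v ≫ (A Y).fold s.1 := by
    rw [← fold_map_mkHom_comp, eq_fold_mkHom_iff, eq_comm]
  rw [Prod.hom_ext_iff]
  refine (and_congr hu Iff.rfl).trans (and_congr_right fun hu => ?_)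
  subst hu
  rw [eq_fold_iff, reassoc_of% (F.map_snd_comp_map_snd _ _)]
  simp [eq_comm, bekicIso]

theorem bekic_isCoalgebraHom_iff {X : C} {Y : D} (s : (X, Y) ⟶ F.obj (X, Y))
    (u : X ⟶ (A B.carrier).carrier) (v : Y ⟶ B.carrier) :
    s ≫ F.map (u ×ₘ v) = (u ×ₘ v) ≫ (bekicIso A B).inv ↔
      u = (A Y).unfold s.1 ≫ (bifreeFunctor A).map v ∧
        v = B.unfold (s.2 ≫ (F.map ((A Y).unfold s.1 ×ₘ 𝟙 Y)).2) := by
  have hu : s.1 ≫ (F.map (u ×ₘ v)).1 = u ≫ (A B.carrier).str.inv ↔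
      u = (A Y).unfold s.1 ≫ (bifreeFunctor A).map v := by
    rw [← unfold_comp_map_mkHom, eq_unfold_mkHom_iff, eq_comm]
  rw [Prod.hom_ext_iff]
  refine (and_congr hu Iff.rfl).trans (and_congr_right fun hu => ?_)
  subst hu
  rw [eq_unfold_iff, Category.assoc, F.map_snd_comp_map_snd]
  simp [eq_comm, bekicIso]

noncomputable def bekic : BifreeAlgebra F where
  carrier := ((A B.carrier).carrier, B.carrier)
  str := bekicIso A B
  isInitial := IsInitial.ofUniqueHom
    (fun ⟨(X, Y), s⟩ => ⟨_ ×ₘ _, ((bekic_isAlgebraHom_iff A B s _ _).2 ⟨rfl, rfl⟩)⟩)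
    (fun ⟨(X, Y), s⟩ m => by
      obtain ⟨hu, hv⟩ := (bekic_isAlgebraHom_iff A B s m.f.1 m.f.2).1 m.h
      exact Endofunctor.Algebra.Hom.ext (Prod.hom_ext (hu.trans (by rw [hv])) hv))
  isTerminal := IsTerminal.ofUniqueHom
    (fun ⟨(X, Y), s⟩ => ⟨_ ×ₘ _, ((bekic_isCoalgebraHom_iff A B s _ _).2 ⟨rfl, rfl⟩)⟩)
    (fun ⟨(X, Y), s⟩ m => by
      obtain ⟨hu, hv⟩ := (bekic_isCoalgebraHom_iff A B s m.f.1 m.f.2).1 m.h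
      exact Endofunctor.Coalgebra.Hom.ext (Prod.hom_ext (hu.trans (by rw [hv])) hv))

end Bekic

end BifreeAlgebra

/-- The product of two `Cpo`-algebraically compact `Cpo`-categories (a
`Cpo`-category with hom-sets ordered componentwise) is `Cpo`-algebraically
compact. -/
theorem prod_cpo_algebraically_compact
    (C : Type u) (D : Type u₁) [Category.{v} C] [Category.{v₁} D]
    [∀ X Y : C, OmegaCompletePartialOrder (X ⟶ Y)]
    [∀ X Y : D, OmegaCompletePartialOrder (X ⟶ Y)]
    [CpoCategory C] [CpoCategory D]
    (hC : CpoAlgebraicallyCompact C) (hD : CpoAlgebraicallyCompact D) :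
    CpoAlgebraicallyCompact (C × D) := by
  rw [cpoAlgebraicallyCompact_iff] at hC hD ⊢
  intro F hF
  have A : ∀ Y : D, BifreeAlgebra (F.fstAt Y) := fun Y => (hC _ (hF.fstAt Y)).some
  obtain ⟨B⟩ := hD _ (hF.sndAlong (BifreeAlgebra.isCpoFunctor_bifreeFunctor hF (A := A)))
  exact ⟨BifreeAlgebra.bekic A B⟩
end

section
/- Final invariants lift along right Cpo-adjoints: let C and D be Cpo-categories and let R : D ⥤ C be a right Cpo-adjoint, i.e. R admits a left adjoint L : C ⥤ D whose hom-set bijections C(X, R.obj Y) ≃ D(L.obj X, Y) are order isomorphisms. Let H : D ⥤ D and G : C ⥤ C be Cpo-endofunctors together with a natural isomorphism φ : H ⋙ R ≅ R ⋙ G. If (X, x : X ⟶ H.obj X) is a terminal H-coalgebra and (Z, z : Z ⟶ G.obj Z) is a terminal G-coalgebra, then the unique G-coalgebra morphism ψ from the G-coalgebra (R.obj X, R.map x ≫ φ.hom.app X) to (Z, z) is an isomorphism; in particular R.obj X ≅ Z. -/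
open CategoryTheory OmegaCompletePartialOrder Limits

universe w v u v₁ u₁ v₂ u₂

/-! The lift `(V, v) ↦ (R V, R v ≫ φ_V)` of `R` to coalgebras has as left adjoint the lift of `L`
along the mate of `φ⁻¹`. Being a right adjoint, it preserves terminal objects, so `ψ` is a
morphism between two terminal `G`-coalgebras. -/

namespace CategoryTheory.Endofunctor.Coalgebra

variable {C : Type u} {D : Type u₁} [Category.{v} C] [Category.{v₁} D] {G : C ⥤ C} {H : D ⥤ D}

def lift (F : D ⥤ C) (α : H ⋙ F ⟶ F ⋙ G) : Coalgebra H ⥤ Coalgebra G where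
  obj V := ⟨F.obj V.V, F.map V.str ≫ α.app V.V⟩
  map f := ⟨F.map f.f, by
    have hα := α.naturality f.f
    dsimp at hα
    rw [Category.assoc, ← hα, ← F.map_comp_assoc, f.h, F.map_comp_assoc]⟩

variable {R : D ⥤ C} {L : C ⥤ D} (adj : L ⊣ R) (φ : H ⋙ R ≅ R ⋙ G)

def mateInv : G ⋙ L ⟶ L ⋙ H :=
  ((mateEquiv adj adj).symm (TwoSquare.mk _ _ _ _ φ.inv)).natTrans

lemma homEquiv_mateInv_comp (W : C) {V : D} (f : L.obj W ⟶ V) :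
    adj.homEquiv _ _ ((mateInv adj φ).app W ≫ H.map f) =
      G.map (adj.homEquiv _ _ f) ≫ φ.inv.app V := by
  have hmate := unit_mateEquiv_symm adj adj (TwoSquare.mk _ _ _ _ φ.inv) W
  change G.map _ ≫ φ.inv.app _ = adj.unit.app (G.obj W) ≫ R.map ((mateInv adj φ).app W) at hmate
  have hφ := φ.inv.naturality f
  dsimp at hφ
  rw [adj.homEquiv_unit, adj.homEquiv_unit, R.map_comp, ← Category.assoc, ← hmate,
    G.map_comp, Category.assoc, Category.assoc, hφ]

lemma map_str_mateInv_comp_eq_iff {W : Coalgebra G} {V : Coalgebra H} (f : L.obj W.V ⟶ V.V) :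
    (L.map W.str ≫ (mateInv adj φ).app W.V) ≫ H.map f = f ≫ V.str ↔
      W.str ≫ G.map (adj.homEquiv _ _ f) = adj.homEquiv _ _ f ≫ R.map V.str ≫ φ.hom.app V.V := by
  rw [← (adj.homEquiv _ _).apply_eq_iff_eq, Category.assoc, adj.homEquiv_naturality_left,
    homEquiv_mateInv_comp, adj.homEquiv_naturality_right, ← Category.assoc, ← Iso.app_inv,
    Iso.comp_inv_eq, Iso.app_hom, Category.assoc]

def liftAdjunction : lift L (mateInv adj φ) ⊣ lift R φ.hom :=
  Adjunction.mkOfHomEquiv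
    { homEquiv W V :=
        { toFun f := ⟨adj.homEquiv _ _ f.f, (map_str_mateInv_comp_eq_iff adj φ f.f).mp f.h⟩
          invFun g := ⟨(adj.homEquiv _ _).symm g.f,
            (map_str_mateInv_comp_eq_iff adj φ _).mpr (by
              have h := g.h
              rwa [← (adj.homEquiv _ _).apply_symm_apply g.f] at h)⟩
          left_inv f := Hom.ext ((adj.homEquiv _ _).symm_apply_apply f.f)
          right_inv g := Hom.ext ((adj.homEquiv _ _).apply_symm_apply g.f) }
      homEquiv_naturality_left_symm f g := Hom.ext (adj.homEquiv_naturality_left_symm f.f g.f)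
      homEquiv_naturality_right f g := Hom.ext (adj.homEquiv_naturality_right f.f g.f) }

noncomputable def isTerminalLiftObj {X : Coalgebra H} (hX : IsTerminal X) :
    IsTerminal ((lift R φ.hom).obj X) :=
  have := (liftAdjunction adj φ).rightAdjoint_preservesLimits
  hX.isTerminalObj _ _

end CategoryTheory.Endofunctor.Coalgebra

/-- Final invariants lift along right `Cpo`-adjoints: if `R : D ⥤ C` has a left
adjoint whose hom-set bijections are order isomorphisms, `H` and `G` are
`Cpo`-endofunctors with `φ : H ⋙ R ≅ R ⋙ G`, and `(X, x)`, `(Z, z)` are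
terminal coalgebras of `H` and `G`, then the unique `G`-coalgebra morphism from
`(R.obj X, R.map x ≫ φ.hom.app X)` to `(Z, z)` is an isomorphism. -/
theorem final_invariants_lift_along_right_cpo_adjoint
    {C : Type u} {D : Type u₁} [Category.{v} C] [Category.{v₁} D]
    [∀ X Y : C, OmegaCompletePartialOrder (X ⟶ Y)]
    [∀ X Y : D, OmegaCompletePartialOrder (X ⟶ Y)]
    [CpoCategory C] [CpoCategory D]
    (R : D ⥤ C) (L : C ⥤ D) (adj : L ⊣ R)
    (hadj : ∀ (X : C) (Y : D) (f g : L.obj X ⟶ Y),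
        f ≤ g ↔ adj.homEquiv X Y f ≤ adj.homEquiv X Y g)
    (H : D ⥤ D) (hH : IsCpoFunctor H) (G : C ⥤ C) (hG : IsCpoFunctor G)
    (φ : H ⋙ R ≅ R ⋙ G)
    (Xc : Endofunctor.Coalgebra H) (hX : IsTerminal Xc)
    (Zc : Endofunctor.Coalgebra G) (hZ : IsTerminal Zc) :
    IsIso (hZ.from
      (⟨R.obj Xc.V, R.map Xc.str ≫ φ.hom.app Xc.V⟩ : Endofunctor.Coalgebra G)).f := by
  let RX := (Endofunctor.Coalgebra.lift R φ.hom).obj Xc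
  have : IsIso (hZ.from RX) :=
    isIso_of_isTerminal (Endofunctor.Coalgebra.isTerminalLiftObj adj φ hX) hZ _
  exact (Endofunctor.Coalgebra.forget G).map_isIso (hZ.from RX)
end
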